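/- Let ε ∈ (0,1], θ ∈ (0,1], η₁ ∈ (0,1), β ∈ (0,1), H_max > 0, σ_max > 0, and σ ∈ (0, σ_max]. Suppose ‖∇f(x)‖ ≥ ε, the greedy condition ‖∇_I f(x)‖ ≥ θ ‖∇f(x)‖ holds, ‖∇²_I f(x)‖ ≤ H_max, the step s ∈ ℝ^{|I|} satisfies m(s) ≤ m(ŝ), and the acceptance test f(x) − f(x + U_I s) ≥ η₁ (q(0) − q(s)) holds. Then f(x) − f(x + U_I s) ≥ c₁ ε², where c₁ = θ η₁ (1 − β) min{θβ/H_max, √(3θβ/σ_max)}. -/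

import Mathlib

open scoped RealInnerProductSpace

noncomputable section

/-- `U_I`: extension by zero from block coordinates to full coordinates. -/
def blockIncl {n : ℕ} (I : Finset (Fin n)) :
    EuclideanSpace ℝ ↥I →ₗ[ℝ] EuclideanSpace ℝ (Fin n) where
  toFun s := WithLp.toLp 2 (fun i => if h : i ∈ I then s ⟨i, h⟩ else 0)
  map_add' s t := by ext i; by_cases h : i ∈ I <;> simp [h]
  map_smul' c s := by ext i; by_cases h : i ∈ I <;> simp [h]

/-- `U_Iᵀ`: restriction of a vector to the block coordinates. -/
def blockRestr {n : ℕ} (I : Finset (Fin n)) :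
    EuclideanSpace ℝ (Fin n) →ₗ[ℝ] EuclideanSpace ℝ ↥I where
  toFun x := WithLp.toLp 2 (fun i => x i)
  map_add' x y := by ext i; simp
  map_smul' c x := by ext i; simp

/-- Block Hessian `U_Iᵀ H U_I` as a continuous linear map. -/
def blockHess {n : ℕ} (I : Finset (Fin n))
    (H : EuclideanSpace ℝ (Fin n) →L[ℝ] EuclideanSpace ℝ (Fin n)) :
    EuclideanSpace ℝ ↥I →L[ℝ] EuclideanSpace ℝ ↥I :=
  LinearMap.toContinuousLinearMap
    ((blockRestr I) ∘ₗ ((H : EuclideanSpace ℝ (Fin n) →ₗ[ℝ] EuclideanSpace ℝ (Fin n)) ∘ₗ blockIncl I))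

/-- Quadratic model `q(s) = f₀ + gᵀs + (1/2) sᵀ H s`. -/
def quadModel {E : Type*} [NormedAddCommGroup E] [InnerProductSpace ℝ E]
    (f₀ : ℝ) (g : E) (H : E →L[ℝ] E) (s : E) : ℝ :=
  f₀ + ⟪g, s⟫ + (1 / 2) * ⟪s, H s⟫

/-- Cubic model `m(s) = q(s) + (σ/6) ‖s‖³`. -/
def cubicModel {E : Type*} [NormedAddCommGroup E] [InnerProductSpace ℝ E]
    (f₀ : ℝ) (g : E) (H : E →L[ℝ] E) (σ : ℝ) (s : E) : ℝ :=
  quadModel f₀ g H s + σ / 6 * ‖s‖ ^ 3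

/-- Gradient of the cubic model: `∇m(s) = g + H s + (σ/2) ‖s‖ s`. -/
def cubicModelGrad {E : Type*} [NormedAddCommGroup E] [InnerProductSpace ℝ E]
    (g : E) (H : E →L[ℝ] E) (σ : ℝ) (s : E) : E :=
  g + H s + (σ / 2 * ‖s‖) • s

/-- The stepsize `α̂ = min{β/‖H‖, √(3β/(σ‖g‖))}`, the first argument being `+∞` if `H = 0`. -/
def alphaHat {E : Type*} [NormedAddCommGroup E] [InnerProductSpace ℝ E]
    (β σ : ℝ) (g : E) (H : E →L[ℝ] E) : ℝ :=
  haveI := Classical.dec (H = 0)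
  if H = 0 then Real.sqrt (3 * β / (σ * ‖g‖))
  else min (β / ‖H‖) (Real.sqrt (3 * β / (σ * ‖g‖)))

/-- The Cauchy-like point `ŝ = -α̂ g`. -/
def sHat {E : Type*} [NormedAddCommGroup E] [InnerProductSpace ℝ E]
    (β σ : ℝ) (g : E) (H : E →L[ℝ] E) : E :=
  -(alphaHat β σ g H) • g


/-! The step `ŝ = -α̂ g` is chosen so that the curvature term `α̂ ‖H‖` and the cubic term
`σ α̂² ‖g‖ / 3` are both at most `β`; hence `m(ŝ) ≤ f(x) - α̂ (1 - β) ‖g‖²`. Since `q ≤ m` and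
`m(s) ≤ m(ŝ)`, the quadratic model decreases by at least as much at `s`, and the acceptance test
passes the fraction `η₁` of it on to `f`. Finally `α̂ ‖g‖² ≥ θ min{θβ/H_max, √(3θβ/σ_max)} ε²`,
because `‖g‖ ≥ θ ε` by the greedy rule and `ε ≤ 1` lets `‖g‖^{3/2}` dominate `θ^{3/2} ε²`. -/

section Model

variable {E : Type*} [NormedAddCommGroup E] [InnerProductSpace ℝ E]
  {f₀ β σ : ℝ} {g : E} {H : E →L[ℝ] E}

theorem quadModel_zero : quadModel f₀ g H 0 = f₀ := by
  simp [quadModel]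

theorem quadModel_le_cubicModel (hσ : 0 ≤ σ) (s : E) :
    quadModel f₀ g H s ≤ cubicModel f₀ g H σ s := by
  unfold cubicModel
  have : 0 ≤ σ / 6 * ‖s‖ ^ 3 := by positivity
  linarith

theorem real_inner_apply_le_opNorm_mul_sq : ⟪g, H g⟫ ≤ ‖H‖ * ‖g‖ ^ 2 :=
  calc ⟪g, H g⟫ ≤ ‖g‖ * ‖H g‖ := real_inner_le_norm g (H g)
    _ ≤ ‖g‖ * (‖H‖ * ‖g‖) := by gcongr; exact H.le_opNorm g
    _ = ‖H‖ * ‖g‖ ^ 2 := by ring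

theorem cubicModel_neg_smul {a : ℝ} (ha : 0 ≤ a) :
    cubicModel f₀ g H σ (-a • g) =
      f₀ - a * ‖g‖ ^ 2 + a ^ 2 / 2 * ⟪g, H g⟫ + σ / 6 * (a * ‖g‖) ^ 3 := by
  rw [cubicModel, quadModel, norm_smul, norm_neg, Real.norm_of_nonneg ha, map_smul,
    real_inner_smul_right, real_inner_smul_left, real_inner_smul_right,
    real_inner_self_eq_norm_sq]
  ring

-- The quadratic and the cubic term each cost at most `β a ‖g‖² / 2`.
theorem cubicModel_neg_smul_le {a : ℝ} (ha : 0 ≤ a) (haH : a * ‖H‖ ≤ β)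
    (haσ : σ * a ^ 2 * ‖g‖ ≤ 3 * β) :
    cubicModel f₀ g H σ (-a • g) ≤ f₀ - a * (1 - β) * ‖g‖ ^ 2 := by
  have hag : 0 ≤ a * ‖g‖ ^ 2 := by positivity
  have hcurv : a ^ 2 / 2 * ⟪g, H g⟫ ≤ β / 2 * (a * ‖g‖ ^ 2) :=
    calc a ^ 2 / 2 * ⟪g, H g⟫ ≤ a ^ 2 / 2 * (‖H‖ * ‖g‖ ^ 2) := by
          gcongr; exact real_inner_apply_le_opNorm_mul_sq
      _ = (a * ‖H‖) / 2 * (a * ‖g‖ ^ 2) := by ring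
      _ ≤ β / 2 * (a * ‖g‖ ^ 2) := by gcongr
  have hcubic : σ / 6 * (a * ‖g‖) ^ 3 ≤ β / 2 * (a * ‖g‖ ^ 2) :=
    calc σ / 6 * (a * ‖g‖) ^ 3 = (σ * a ^ 2 * ‖g‖) / 6 * (a * ‖g‖ ^ 2) := by ring
      _ ≤ (3 * β) / 6 * (a * ‖g‖ ^ 2) := by gcongr
      _ = β / 2 * (a * ‖g‖ ^ 2) := by ring
  rw [cubicModel_neg_smul ha]
  linarith

end Model

section Stepsize

variable {E : Type*} [NormedAddCommGroup E] [InnerProductSpace ℝ E]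
  {β σ : ℝ} {g : E} {H : E →L[ℝ] E}

theorem alphaHat_le_sqrt : alphaHat β σ g H ≤ Real.sqrt (3 * β / (σ * ‖g‖)) := by
  unfold alphaHat
  split_ifs
  · exact le_rfl
  · exact min_le_right _ _

theorem alphaHat_nonneg (hβ : 0 ≤ β) : 0 ≤ alphaHat β σ g H := by
  unfold alphaHat
  split_ifs
  · positivity
  · exact le_min (by positivity) (Real.sqrt_nonneg _)

theorem alphaHat_mul_opNorm_le (hβ : 0 ≤ β) : alphaHat β σ g H * ‖H‖ ≤ β := by
  unfold alphaHat
  split_ifs with hH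
  · simpa [hH] using hβ
  · calc min (β / ‖H‖) (Real.sqrt (3 * β / (σ * ‖g‖))) * ‖H‖ ≤ β / ‖H‖ * ‖H‖ := by
          gcongr; exact min_le_left _ _
      _ = β := div_mul_cancel₀ β (norm_ne_zero_iff.mpr hH)

theorem mul_alphaHat_sq_mul_norm_le (hβ : 0 ≤ β) (hσ : 0 < σ) (hg : g ≠ 0) :
    σ * alphaHat β σ g H ^ 2 * ‖g‖ ≤ 3 * β := by
  have hσg : 0 < σ * ‖g‖ := mul_pos hσ (norm_pos_iff.mpr hg)
  have hsq : alphaHat β σ g H ^ 2 ≤ 3 * β / (σ * ‖g‖) :=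
    calc alphaHat β σ g H ^ 2 ≤ Real.sqrt (3 * β / (σ * ‖g‖)) ^ 2 := by
          gcongr
          · exact alphaHat_nonneg hβ
          · exact alphaHat_le_sqrt
      _ = 3 * β / (σ * ‖g‖) := Real.sq_sqrt (by positivity)
  calc σ * alphaHat β σ g H ^ 2 * ‖g‖ = alphaHat β σ g H ^ 2 * (σ * ‖g‖) := by ring
    _ ≤ 3 * β := (le_div_iff₀ hσg).mp hsq

theorem min_le_alphaHat {M : ℝ} (hβ : 0 ≤ β) (hHM : ‖H‖ ≤ M) :
    min (β / M) (Real.sqrt (3 * β / (σ * ‖g‖))) ≤ alphaHat β σ g H := by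
  unfold alphaHat
  split_ifs with hH
  · exact min_le_right _ _
  · have : 0 < ‖H‖ := norm_pos_iff.mpr hH
    gcongr

theorem cubicModel_sHat_le {f₀ : ℝ} (hβ : 0 ≤ β) (hσ : 0 < σ) (hg : g ≠ 0) :
    cubicModel f₀ g H σ (sHat β σ g H) ≤ f₀ - alphaHat β σ g H * (1 - β) * ‖g‖ ^ 2 := by
  unfold sHat
  exact cubicModel_neg_smul_le (alphaHat_nonneg hβ) (alphaHat_mul_opNorm_le hβ)
    (mul_alphaHat_sq_mul_norm_le hβ hσ hg)

theorem min_mul_sq_le_quadModel_sub {f₀ M : ℝ} (hβ : 0 ≤ β) (hβ1 : β ≤ 1) (hσ : 0 < σ)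
    (hg : g ≠ 0) (hHM : ‖H‖ ≤ M) {s : E}
    (hs : cubicModel f₀ g H σ s ≤ cubicModel f₀ g H σ (sHat β σ g H)) :
    (1 - β) * (min (β / M) (Real.sqrt (3 * β / (σ * ‖g‖))) * ‖g‖ ^ 2) ≤
      quadModel f₀ g H 0 - quadModel f₀ g H s := by
  have hα := min_le_alphaHat (σ := σ) (g := g) hβ hHM
  have hdecr := (quadModel_le_cubicModel hσ.le s).trans (hs.trans (cubicModel_sHat_le hβ hσ hg))
  rw [quadModel_zero]
  have : (1 - β) * (min (β / M) (Real.sqrt (3 * β / (σ * ‖g‖))) * ‖g‖ ^ 2) ≤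
      alphaHat β σ g H * (1 - β) * ‖g‖ ^ 2 :=
    calc _ ≤ (1 - β) * (alphaHat β σ g H * ‖g‖ ^ 2) := by gcongr
      _ = _ := by ring
  linarith

end Stepsize

section LowerBound

variable {θ ε β M σ σmax G : ℝ}

theorem mul_div_mul_sq_le (hθ : 0 ≤ θ) (hε : 0 ≤ ε) (hβM : 0 ≤ β / M) (hG : θ * ε ≤ G) :
    θ * (θ * β / M) * ε ^ 2 ≤ β / M * G ^ 2 :=
  calc θ * (θ * β / M) * ε ^ 2 = β / M * (θ * ε) ^ 2 := by ring
    _ ≤ β / M * G ^ 2 := by gcongr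

theorem mul_sqrt_mul_sq_le (hθ : 0 ≤ θ) (hε : 0 ≤ ε) (hε1 : ε ≤ 1) (hβ : 0 ≤ β) (hσ : 0 < σ)
    (hσmax : σ ≤ σmax) (hG : θ * ε ≤ G) :
    θ * Real.sqrt (3 * θ * β / σmax) * ε ^ 2 ≤ Real.sqrt (3 * β / (σ * G)) * G ^ 2 := by
  have hθε : 0 ≤ θ * ε := by positivity
  have hGpos : 0 ≤ G := hθε.trans hG
  have hσmax0 : 0 < σmax := hσ.trans_le hσmax
  rcases hGpos.eq_or_lt with rfl | hGpos
  · have : θ * ε = 0 := le_antisymm hG hθε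
    rcases mul_eq_zero.mp this with rfl | rfl <;> simp
  refine (pow_le_pow_iff_left₀ (by positivity) (by positivity) two_ne_zero).mp ?_
  have hsqL : (θ * Real.sqrt (3 * θ * β / σmax) * ε ^ 2) ^ 2 = 3 * β * (θ * ε) ^ 3 * ε / σmax := by
    rw [mul_pow, mul_pow, Real.sq_sqrt (by positivity)]
    ring
  have hsqR : (Real.sqrt (3 * β / (σ * G)) * G ^ 2) ^ 2 = 3 * β * G ^ 3 / σ := by
    rw [mul_pow, Real.sq_sqrt (by positivity)]
    field_simp
  rw [hsqL, hsqR]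
  calc 3 * β * (θ * ε) ^ 3 * ε / σmax ≤ 3 * β * G ^ 3 * 1 / σ := by gcongr
    _ = 3 * β * G ^ 3 / σ := by ring

theorem mul_min_mul_sq_le (hθ : 0 ≤ θ) (hε : 0 ≤ ε) (hε1 : ε ≤ 1) (hβ : 0 ≤ β) (hβM : 0 ≤ β / M)
    (hσ : 0 < σ) (hσmax : σ ≤ σmax) (hG : θ * ε ≤ G) :
    θ * min (θ * β / M) (Real.sqrt (3 * θ * β / σmax)) * ε ^ 2 ≤
      min (β / M) (Real.sqrt (3 * β / (σ * G))) * G ^ 2 := by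
  rw [mul_min_of_nonneg _ _ hθ, min_mul_of_nonneg _ _ (by positivity),
    min_mul_of_nonneg _ _ (by positivity)]
  exact min_le_min (mul_div_mul_sq_le hθ hε hβM hG)
    (mul_sqrt_mul_sq_le hθ hε hε1 hβ hσ hσmax hG)

end LowerBound

theorem stmt12_general (n : ℕ)
    (f : EuclideanSpace ℝ (Fin n) → ℝ)
    (gradf : EuclideanSpace ℝ (Fin n) → EuclideanSpace ℝ (Fin n))
    (hessf : EuclideanSpace ℝ (Fin n) → (EuclideanSpace ℝ (Fin n) →L[ℝ] EuclideanSpace ℝ (Fin n)))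
    (x : EuclideanSpace ℝ (Fin n)) (I : Finset (Fin n))
    (hg : blockRestr I (gradf x) ≠ 0)
    (ε θ η₁ β Hmax σmax σ : ℝ)
    (hε0 : 0 < ε) (hε1 : ε ≤ 1) (hθ0 : 0 < θ)
    (hη₁0 : 0 < η₁) (hβ0 : 0 < β) (hβ1 : β < 1)
    (hσ0 : 0 < σ) (hσ1 : σ ≤ σmax)
    (hgε : ε ≤ ‖gradf x‖)
    (hgreedy : θ * ‖gradf x‖ ≤ ‖blockRestr I (gradf x)‖)
    (hHb : ‖blockHess I (hessf x)‖ ≤ Hmax)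
    (s : EuclideanSpace ℝ ↥I)
    (hs : cubicModel (f x) (blockRestr I (gradf x)) (blockHess I (hessf x)) σ s ≤
      cubicModel (f x) (blockRestr I (gradf x)) (blockHess I (hessf x)) σ
        (sHat β σ (blockRestr I (gradf x)) (blockHess I (hessf x))))
    (hacc : η₁ * (quadModel (f x) (blockRestr I (gradf x)) (blockHess I (hessf x)) 0 -
        quadModel (f x) (blockRestr I (gradf x)) (blockHess I (hessf x)) s) ≤
      f x - f (x + blockIncl I s)) :
    θ * η₁ * (1 - β) * min (θ * β / Hmax) (Real.sqrt (3 * θ * β / σmax)) * ε ^ 2 ≤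
      f x - f (x + blockIncl I s) := by
  set g := blockRestr I (gradf x)
  have hθε : θ * ε ≤ ‖g‖ := (mul_le_mul_of_nonneg_left hgε hθ0.le).trans hgreedy
  have hβM : 0 ≤ β / Hmax := div_nonneg hβ0.le ((norm_nonneg _).trans hHb)
  have hmin := mul_min_mul_sq_le hθ0.le hε0.le hε1 hβ0.le hβM hσ0 hσ1 hθε
  have hdecr := min_mul_sq_le_quadModel_sub hβ0.le hβ1.le hσ0 hg hHb hs
  calc θ * η₁ * (1 - β) * min (θ * β / Hmax) (Real.sqrt (3 * θ * β / σmax)) * ε ^ 2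
      = η₁ * ((1 - β) * (θ * min (θ * β / Hmax) (Real.sqrt (3 * θ * β / σmax)) * ε ^ 2)) := by
        ring
    _ ≤ η₁ * ((1 - β) * (min (β / Hmax) (Real.sqrt (3 * β / (σ * ‖g‖))) * ‖g‖ ^ 2)) := by
        gcongr
    _ ≤ η₁ * (quadModel (f x) g (blockHess I (hessf x)) 0 -
          quadModel (f x) g (blockHess I (hessf x)) s) := by gcongr
    _ ≤ f x - f (x + blockIncl I s) := hacc

theorem stmt12 (n : ℕ) (hn : 0 < n)
    (f : EuclideanSpace ℝ (Fin n) → ℝ)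
    (gradf : EuclideanSpace ℝ (Fin n) → EuclideanSpace ℝ (Fin n))
    (hessf : EuclideanSpace ℝ (Fin n) → (EuclideanSpace ℝ (Fin n) →L[ℝ] EuclideanSpace ℝ (Fin n)))
    (hf : ContDiff ℝ 2 f)
    (hgradf : ∀ x, HasGradientAt f (gradf x) x)
    (hhessf : ∀ x, HasFDerivAt gradf (hessf x) x)
    (x : EuclideanSpace ℝ (Fin n)) (I : Finset (Fin n))
    (hg : blockRestr I (gradf x) ≠ 0)
    (ε θ η₁ β Hmax σmax σ : ℝ)
    (hε0 : 0 < ε) (hε1 : ε ≤ 1) (hθ0 : 0 < θ) (hθ1 : θ ≤ 1)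
    (hη₁0 : 0 < η₁) (hη₁1 : η₁ < 1) (hβ0 : 0 < β) (hβ1 : β < 1)
    (hHmax : 0 < Hmax) (hσmax : 0 < σmax) (hσ0 : 0 < σ) (hσ1 : σ ≤ σmax)
    (hgε : ε ≤ ‖gradf x‖)
    (hgreedy : θ * ‖gradf x‖ ≤ ‖blockRestr I (gradf x)‖)
    (hHb : ‖blockHess I (hessf x)‖ ≤ Hmax)
    (s : EuclideanSpace ℝ ↥I)
    (hs : cubicModel (f x) (blockRestr I (gradf x)) (blockHess I (hessf x)) σ s ≤
      cubicModel (f x) (blockRestr I (gradf x)) (blockHess I (hessf x)) σ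
        (sHat β σ (blockRestr I (gradf x)) (blockHess I (hessf x))))
    (hacc : η₁ * (quadModel (f x) (blockRestr I (gradf x)) (blockHess I (hessf x)) 0 -
        quadModel (f x) (blockRestr I (gradf x)) (blockHess I (hessf x)) s) ≤
      f x - f (x + blockIncl I s)) :
    θ * η₁ * (1 - β) * min (θ * β / Hmax) (Real.sqrt (3 * θ * β / σmax)) * ε ^ 2 ≤
      f x - f (x + blockIncl I s) :=
  stmt12_general n f gradf hessf x I hg ε θ η₁ β Hmax σmax σ hε0 hε1 hθ0 hη₁0 hβ0 hβ1 hσ0 hσ1 hgε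
    hgreedy hHb s hs hacc

end
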